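/- The bicyclic monoid B = ⟨a, b ∣ ab = 1⟩ satisfies Adjan's identity: for all x, y ∈ B, (xy²x)·(xy)·(xy²x) = (xy²x)·(yx)·(xy²x). -/
import Mathlib

/-- The single defining relation of the bicyclic monoid `⟨a, b ∣ ab = 1⟩`:
the word `ab` (here `a` is generator `0` and `b` is generator `1`) equals the empty word. -/
def bicyclicRel : FreeMonoid (Fin 2) → FreeMonoid (Fin 2) → Prop :=
  fun u v => u = FreeMonoid.of 0 * FreeMonoid.of 1 ∧ v = 1

/-- The bicyclic monoid `B = ⟨a, b ∣ ab = 1⟩`, as a presented monoid. -/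
abbrev Bicyclic : Type := PresentedMonoid bicyclicRel

namespace BicyclicAux

/-- the generator `a` -/
noncomputable def A : Bicyclic := PresentedMonoid.of bicyclicRel 0
/-- the generator `b` -/
noncomputable def Bg : Bicyclic := PresentedMonoid.of bicyclicRel 1

lemma hAB : A * Bg = 1 := by
  show PresentedMonoid.mk bicyclicRel (FreeMonoid.of 0) *
      PresentedMonoid.mk bicyclicRel (FreeMonoid.of 1) = 1
  rw [← map_mul]
  exact Quotient.sound (ConGen.Rel.of _ _ ⟨rfl, rfl⟩)

lemma hABn (n : ℕ) : A ^ n * Bg ^ n = 1 := by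
  induction n with
  | zero => simp
  | succ n ih =>
    rw [pow_succ, pow_succ']
    calc A ^ n * A * (Bg * Bg ^ n) = A ^ n * (A * Bg) * Bg ^ n := by simp [mul_assoc]
      _ = A ^ n * Bg ^ n := by rw [hAB, mul_one]
      _ = 1 := ih

lemma key (n p : ℕ) : A ^ n * Bg ^ p = Bg ^ (p - n) * A ^ (n - p) := by
  rcases le_total n p with h | h
  · have : Bg ^ p = Bg ^ n * Bg ^ (p - n) := by rw [← pow_add]; congr 1; omega
    rw [this, ← mul_assoc, hABn, one_mul, Nat.sub_eq_zero_of_le h, pow_zero, mul_one]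
  · have : A ^ n = A ^ (n - p) * A ^ p := by rw [← pow_add]; congr 1; omega
    rw [this, mul_assoc, hABn, mul_one, Nat.sub_eq_zero_of_le h, pow_zero, one_mul]

lemma prodform (m n p q : ℕ) :
    (Bg ^ m * A ^ n) * (Bg ^ p * A ^ q) = Bg ^ (m + (p - n)) * A ^ ((n - p) + q) := by
  calc (Bg ^ m * A ^ n) * (Bg ^ p * A ^ q)
      = Bg ^ m * (A ^ n * Bg ^ p) * A ^ q := by rw [mul_assoc, mul_assoc, mul_assoc]
    _ = Bg ^ m * (Bg ^ (p - n) * A ^ (n - p)) * A ^ q := by rw [key]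
    _ = (Bg ^ m * Bg ^ (p - n)) * (A ^ (n - p) * A ^ q) := by
        rw [mul_assoc, mul_assoc, mul_assoc]
    _ = Bg ^ (m + (p - n)) * A ^ ((n - p) + q) := by rw [pow_add, pow_add]

lemma normal_form (x : Bicyclic) : ∃ m n : ℕ, x = Bg ^ m * A ^ n := by
  have : x ∈ (⊤ : Submonoid Bicyclic) := trivial
  rw [← PresentedMonoid.closure_range_of bicyclicRel] at this
  induction this using Submonoid.closure_induction with
  | mem z hz =>
    obtain ⟨i, rfl⟩ := hz
    fin_cases i
    · exact ⟨0, 1, by simp [A]⟩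
    · exact ⟨1, 0, by simp [Bg]⟩
  | one => exact ⟨0, 0, by simp⟩
  | mul a b _ _ ha hb =>
    obtain ⟨m, n, rfl⟩ := ha
    obtain ⟨p, q, rfl⟩ := hb
    exact ⟨m + (p - n), (n - p) + q, prodform m n p q⟩

def f : Fin 2 → Function.End ℕ := fun i => if i = 0 then (fun k => k - 1) else (fun k => k + 1)

lemma end_mul_apply (g h : Function.End ℕ) (k : ℕ) : (g * h) k = g (h k) := rfl
lemma end_one_apply (k : ℕ) : (1 : Function.End ℕ) k = k := rfl

lemma f0 (k : ℕ) : f 0 k = k - 1 := by simp [f]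
lemma f1 (k : ℕ) : f 1 k = k + 1 := by simp [f]

/-- the faithful action on ℕ : `a` acts as predecessor, `b` as successor -/
noncomputable def φ : Bicyclic →* Function.End ℕ :=
  PresentedMonoid.lift f
    (by
      rintro u v ⟨rfl, rfl⟩
      simp only [map_mul, map_one, FreeMonoid.lift_eval_of]
      funext k
      rw [end_mul_apply, f1, f0, end_one_apply]
      omega)

lemma φ_A (k : ℕ) : (φ A : ℕ → ℕ) k = k - 1 := by
  show (PresentedMonoid.lift f _ (PresentedMonoid.of bicyclicRel 0)) k = k - 1
  rw [PresentedMonoid.lift_of, f0]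

lemma φ_Bg (k : ℕ) : (φ Bg : ℕ → ℕ) k = k + 1 := by
  show (PresentedMonoid.lift f _ (PresentedMonoid.of bicyclicRel 1)) k = k + 1
  rw [PresentedMonoid.lift_of, f1]

lemma φ_A_pow (n : ℕ) (k : ℕ) : (φ (A ^ n) : ℕ → ℕ) k = k - n := by
  induction n generalizing k with
  | zero => rw [pow_zero, map_one, end_one_apply]; omega
  | succ n ih =>
    rw [pow_succ, map_mul]
    rw [end_mul_apply, φ_A, ih]; omega

lemma φ_Bg_pow (m : ℕ) (k : ℕ) : (φ (Bg ^ m) : ℕ → ℕ) k = k + m := by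
  induction m generalizing k with
  | zero => rw [pow_zero, map_one, end_one_apply]; omega
  | succ m ih =>
    rw [pow_succ, map_mul]
    rw [end_mul_apply, φ_Bg, ih]; omega

lemma φ_nf (m n : ℕ) (k : ℕ) : (φ (Bg ^ m * A ^ n) : ℕ → ℕ) k = (k - n) + m := by
  rw [map_mul, end_mul_apply, φ_A_pow, φ_Bg_pow]

lemma φ_inj : Function.Injective φ := by
  intro x y h
  obtain ⟨m, n, rfl⟩ := normal_form x
  obtain ⟨p, q, rfl⟩ := normal_form y
  have h0 := congrFun (congrArg (fun f : Function.End ℕ => (f : ℕ → ℕ)) h) 0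
  have h1 := congrFun (congrArg (fun f : Function.End ℕ => (f : ℕ → ℕ)) h) (n + q)
  simp only [φ_nf] at h0 h1
  have hm : m = p := by omega
  have hn : n = q := by omega
  rw [hm, hn]

end BicyclicAux

set_option maxHeartbeats 1000000 in
lemma natid (k m n p q : ℕ) :
    k - n + m - q + p - q + p - n + m - q + p - n + m - n + m - q + p - q + p - n + m =
      k - n + m - q + p - q + p - n + m - n + m - q + p - n + m - q + p - q + p - n + m := by
  omega

set_option maxHeartbeats 400000 in
/-- The bicyclic monoid satisfies Adjan's identity
`(xy²x)(xy)(xy²x) = (xy²x)(yx)(xy²x)` for all `x, y`. -/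
theorem stmt16 (x y : Bicyclic) :
    (x * y ^ 2 * x) * (x * y) * (x * y ^ 2 * x) =
      (x * y ^ 2 * x) * (y * x) * (x * y ^ 2 * x) := by
  apply BicyclicAux.φ_inj
  obtain ⟨m, n, hx⟩ := BicyclicAux.normal_form x
  obtain ⟨p, q, hy⟩ := BicyclicAux.normal_form y
  funext k
  have hx' : ∀ k, (BicyclicAux.φ x : ℕ → ℕ) k = (k - n) + m := by
    intro k; rw [hx]; exact BicyclicAux.φ_nf m n k
  have hy' : ∀ k, (BicyclicAux.φ y : ℕ → ℕ) k = (k - q) + p := by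
    intro k; rw [hy]; exact BicyclicAux.φ_nf p q k
  show (BicyclicAux.φ ((x * y ^ 2 * x) * (x * y) * (x * y ^ 2 * x)) : ℕ → ℕ) k =
    (BicyclicAux.φ ((x * y ^ 2 * x) * (y * x) * (x * y ^ 2 * x)) : ℕ → ℕ) k
  simp only [map_mul, map_pow, sq, BicyclicAux.end_mul_apply]
  simp only [hx', hy']
  exact natid k m n p q
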